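/- For all 0<q<1, the series Σ_{k=0}^{∞} (λ_k(q) − κ(q)) converges, and the sequence of offsets b_n(q) converges as n→∞ with limit b(q) = 2·κ(q)·Σ_{k=0}^{∞} (λ_k(q) − κ(q)). Moreover this limit b(q) is strictly positive. -/

import Mathlib

/-! Writing `c_k = λ_k - κ`, every product `λ_i λ_j - κ²` splits as `c_i c_j + κ c_i + κ c_j`, so
`b_{n+1} = Σ_{i+j=n} c_i c_j + 2κ Σ_{k≤n} c_k`. Since `0 ≤ c_k ≤ q^{k+1}/(1-q)`, the sequence `c`
is summable; the first sum is then the general term of the Cauchy product of `c` with itself and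
tends to `0`, while the second tends to `2κ Σ c_k`. The limit is positive because `κ > 0` and
`c_0 = 1 - κ ≥ q`. -/

/-- Partial product of the Euler function: `λ_k(q) = ∏_{i=1}^k (1 - q^i)`, with `λ_0(q) = 1`. -/
noncomputable def eulerLam (q : ℝ) (k : ℕ) : ℝ := ∏ i ∈ Finset.range k, (1 - q ^ (i + 1))

/-- The Euler function `κ(q) = ∏_{i=1}^∞ (1 - q^i)`. -/
noncomputable def eulerKappa (q : ℝ) : ℝ := ∏' i : ℕ, (1 - q ^ (i + 1))

/-- The tail product `μ_n(q) = ∏_{i=n}^∞ (1 - q^i)`. -/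
noncomputable def eulerMu (q : ℝ) (n : ℕ) : ℝ := ∏' i : ℕ, (1 - q ^ (n + i))

/-- The offset `b_n(q) = Σ_{k=1}^n λ_{k-1}(q) λ_{n-k}(q) - n κ(q)²`, the expected number of
posts in a random graph order on `n` elements minus `n κ(q)²`. -/
noncomputable def postOffset (q : ℝ) (n : ℕ) : ℝ :=
  (∑ k ∈ Finset.Icc 1 n, eulerLam q (k - 1) * eulerLam q (n - k)) - n * eulerKappa q ^ 2

open Filter Topology Finset Finset.Nat

section CauchyProduct

variable {R : Type*}

theorem sum_antidiagonal_mul_sub_eq [CommRing R] (a : ℕ → R) (κ : R) (n : ℕ) :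
    ∑ kl ∈ antidiagonal n, a kl.1 * a kl.2 - (n + 1) * κ ^ 2 =
      ∑ kl ∈ antidiagonal n, (a kl.1 - κ) * (a kl.2 - κ) +
        2 * κ * ∑ k ∈ range (n + 1), (a k - κ) := by
  have hfst : ∑ kl ∈ antidiagonal n, (a kl.1 - κ) = ∑ k ∈ range (n + 1), (a k - κ) :=
    sum_antidiagonal_eq_sum_range_succ_mk (fun kl => a kl.1 - κ) n
  have hsnd : ∑ kl ∈ antidiagonal n, (a kl.2 - κ) = ∑ k ∈ range (n + 1), (a k - κ) := by
    rw [← hfst, ← sum_antidiagonal_swap]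
    rfl
  have hconst : ∑ _kl ∈ antidiagonal n, κ ^ 2 = (n + 1) * κ ^ 2 := by
    rw [sum_const, card_antidiagonal, nsmul_eq_mul]
    push_cast
    ring
  rw [← hconst, ← sum_sub_distrib]
  calc _ = ∑ kl ∈ antidiagonal n,
        ((a kl.1 - κ) * (a kl.2 - κ) + κ * (a kl.1 - κ) + κ * (a kl.2 - κ)) :=
        sum_congr rfl fun kl _ => by ring
    _ = _ := by
        rw [sum_add_distrib, sum_add_distrib, ← mul_sum, ← mul_sum, hfst, hsnd]
        ring

theorem tendsto_sum_antidiagonal_mul_sub [NormedCommRing R] [CompleteSpace R] {a : ℕ → R}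
    {κ : R} (ha : Summable fun k => ‖a k - κ‖) :
    Tendsto (fun n : ℕ => ∑ kl ∈ antidiagonal n, a kl.1 * a kl.2 - (n + 1) * κ ^ 2) atTop
      (𝓝 (2 * κ * ∑' k, (a k - κ))) := by
  have hquad : Tendsto (fun n => ∑ kl ∈ antidiagonal n, (a kl.1 - κ) * (a kl.2 - κ)) atTop
      (𝓝 0) :=
    tendsto_zero_iff_norm_tendsto_zero.2
      (summable_norm_sum_mul_antidiagonal_of_summable_norm ha ha).tendsto_atTop_zero
  have hlin : Tendsto (fun n => ∑ k ∈ range (n + 1), (a k - κ)) atTop (𝓝 (∑' k, (a k - κ))) :=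
    (tendsto_add_atTop_iff_nat 1).2 ha.of_norm.hasSum.tendsto_sum_nat
  simpa only [sum_antidiagonal_mul_sub_eq, zero_add] using hquad.add (hlin.const_mul (2 * κ))

end CauchyProduct

section Euler

theorem eulerLam_zero (q : ℝ) : eulerLam q 0 = 1 :=
  prod_range_zero _

theorem eulerLam_succ (q : ℝ) (k : ℕ) : eulerLam q (k + 1) = eulerLam q k * (1 - q ^ (k + 1)) :=
  prod_range_succ _ _

theorem eulerLam_one (q : ℝ) : eulerLam q 1 = 1 - q := by
  rw [eulerLam_succ, eulerLam_zero, zero_add, pow_one, one_mul]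

theorem eulerLam_sub_succ (q : ℝ) (k : ℕ) :
    eulerLam q k - eulerLam q (k + 1) = eulerLam q k * q ^ (k + 1) := by
  rw [eulerLam_succ]
  ring

theorem postOffset_succ (q : ℝ) (n : ℕ) :
    postOffset q (n + 1) =
      ∑ kl ∈ antidiagonal n, eulerLam q kl.1 * eulerLam q kl.2 - (n + 1) * eulerKappa q ^ 2 := by
  rw [postOffset, sum_antidiagonal_eq_sum_range_succ (fun i j => eulerLam q i * eulerLam q j),
    ← Ico_add_one_right_eq_Icc, sum_Ico_eq_sum_range]
  push_cast
  congr 1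
  refine sum_congr (by simp) fun i hi => ?_
  rw [mem_range] at hi
  congr 2 <;> omega

variable {q : ℝ}

theorem eulerLam_mem_Icc (hq0 : 0 ≤ q) (hq1 : q ≤ 1) (k : ℕ) : eulerLam q k ∈ Set.Icc 0 1 :=
  ⟨prod_nonneg fun _ _ => sub_nonneg.2 (pow_le_one₀ hq0 hq1),
    prod_le_one (fun _ _ => sub_nonneg.2 (pow_le_one₀ hq0 hq1))
      fun _ _ => sub_le_self _ (pow_nonneg hq0 _)⟩

theorem eulerLam_antitone (hq0 : 0 ≤ q) (hq1 : q ≤ 1) : Antitone (eulerLam q) :=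
  antitone_nat_of_succ_le fun k => sub_nonneg.1 <| by
    rw [eulerLam_sub_succ]
    exact mul_nonneg (eulerLam_mem_Icc hq0 hq1 k).1 (pow_nonneg hq0 _)

theorem eulerLam_sub_le_sum (hq0 : 0 ≤ q) (hq1 : q ≤ 1) {k n : ℕ} (hkn : k ≤ n) :
    eulerLam q k - eulerLam q n ≤ ∑ j ∈ Ico k n, q ^ (j + 1) := by
  induction n, hkn using Nat.le_induction with
  | base => simp
  | succ n hkn ih =>
    have hstep : eulerLam q n * q ^ (n + 1) ≤ q ^ (n + 1) :=
      mul_le_of_le_one_left (pow_nonneg hq0 _) (eulerLam_mem_Icc hq0 hq1 n).2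
    rw [← eulerLam_sub_succ] at hstep
    rw [sum_Ico_succ_top hkn]
    linarith

theorem hasProd_one_sub_pow_succ (hq0 : 0 ≤ q) (hq1 : q < 1) :
    HasProd (fun i : ℕ => 1 - q ^ (i + 1)) (Real.exp (∑' i : ℕ, Real.log (1 - q ^ (i + 1)))) := by
  have hsum : Summable fun i : ℕ => -q ^ (i + 1) :=
    ((summable_geometric_of_lt_one hq0 hq1).mul_left q).neg.congr fun _ => by ring
  have hlog := (Real.summable_log_one_add_of_summable hsum).hasSum
  simp only [← sub_eq_add_neg] at hlog
  exact Real.hasProd_of_hasSum_log (fun i => sub_pos.2 (pow_lt_one₀ hq0 hq1 i.succ_ne_zero)) hlog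

theorem eulerKappa_pos (hq0 : 0 ≤ q) (hq1 : q < 1) : 0 < eulerKappa q := by
  rw [eulerKappa, (hasProd_one_sub_pow_succ hq0 hq1).tprod_eq]
  exact Real.exp_pos _

theorem tendsto_eulerLam (hq0 : 0 ≤ q) (hq1 : q < 1) :
    Tendsto (eulerLam q) atTop (𝓝 (eulerKappa q)) :=
  (hasProd_one_sub_pow_succ hq0 hq1).multipliable.hasProd.tendsto_prod_nat

theorem eulerKappa_le_eulerLam (hq0 : 0 ≤ q) (hq1 : q < 1) (k : ℕ) :
    eulerKappa q ≤ eulerLam q k :=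
  (eulerLam_antitone hq0 hq1.le).le_of_tendsto (tendsto_eulerLam hq0 hq1) k

theorem eulerLam_sub_eulerKappa_le (hq0 : 0 ≤ q) (hq1 : q < 1) (k : ℕ) :
    eulerLam q k - eulerKappa q ≤ q ^ (k + 1) / (1 - q) := by
  refine le_of_tendsto (tendsto_const_nhds.sub (tendsto_eulerLam hq0 hq1)) ?_
  filter_upwards [eventually_ge_atTop k] with n hkn
  calc eulerLam q k - eulerLam q n ≤ ∑ j ∈ Ico k n, q ^ (j + 1) :=
        eulerLam_sub_le_sum hq0 hq1.le hkn
    _ = q * ∑ j ∈ Ico k n, q ^ j := by simp only [pow_succ', mul_sum]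
    _ ≤ q * (q ^ k / (1 - q)) := by gcongr; exact geom_sum_Ico_le_of_lt_one hq0 hq1
    _ = q ^ (k + 1) / (1 - q) := by ring

theorem summable_eulerLam_sub_eulerKappa (hq0 : 0 ≤ q) (hq1 : q < 1) :
    Summable fun k => eulerLam q k - eulerKappa q :=
  (((summable_geometric_of_lt_one hq0 hq1).mul_left (q / (1 - q))).congr fun k => by
      ring).of_nonneg_of_le (fun k => sub_nonneg.2 (eulerKappa_le_eulerLam hq0 hq1 k))
    (eulerLam_sub_eulerKappa_le hq0 hq1)

theorem tsum_eulerLam_sub_eulerKappa_pos (hq0 : 0 < q) (hq1 : q < 1) :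
    0 < ∑' k, (eulerLam q k - eulerKappa q) := by
  have hκ : eulerKappa q < 1 := calc
    eulerKappa q ≤ eulerLam q 1 := eulerKappa_le_eulerLam hq0.le hq1 1
    _ < 1 := by rw [eulerLam_one]; linarith
  refine (summable_eulerLam_sub_eulerKappa hq0.le hq1).tsum_pos
    (fun k => sub_nonneg.2 (eulerKappa_le_eulerLam hq0.le hq1 k)) 0 ?_
  rwa [eulerLam_zero, sub_pos]

end Euler

/-- For all `0 < q < 1`, the series `Σ_{k=0}^∞ (λ_k(q) - κ(q))` converges, the offsets
`b_n(q)` converge as `n → ∞` with limit `b(q) = 2κ(q)·Σ_{k=0}^∞ (λ_k(q) - κ(q))`, and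
this limit is strictly positive. -/
theorem postOffset_tendsto (q : ℝ) (hq0 : 0 < q) (hq1 : q < 1) :
    Summable (fun k : ℕ => eulerLam q k - eulerKappa q) ∧
    Filter.Tendsto (fun n : ℕ => postOffset q n) Filter.atTop
      (nhds (2 * eulerKappa q * ∑' k : ℕ, (eulerLam q k - eulerKappa q))) ∧
    0 < 2 * eulerKappa q * ∑' k : ℕ, (eulerLam q k - eulerKappa q) := by
  have hsum := summable_eulerLam_sub_eulerKappa hq0.le hq1
  have hnorm : Summable fun k => ‖eulerLam q k - eulerKappa q‖ := by
    simpa only [Real.norm_eq_abs] using hsum.abs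
  refine ⟨hsum, ?_, mul_pos (mul_pos two_pos (eulerKappa_pos hq0.le hq1))
    (tsum_eulerLam_sub_eulerKappa_pos hq0 hq1)⟩
  rw [← tendsto_add_atTop_iff_nat 1]
  simpa only [postOffset_succ] using tendsto_sum_antidiagonal_mul_sub hnorm
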